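/- Let p be a prime, let n be a divisor of p − 1 with 2 < n < p − 1, and let α : ZMod n → (ZMod p)ˣ be a group homomorphism that is not injective; assume moreover that if n is even then the kernel of α has even order. Then the semidirect product ZMod p ⋊_α ZMod n, in which k ∈ ZMod n acts on ZMod p by multiplication by α(k), is not a CI-group with respect to ternary relational structures. -/

import Mathlib

open Equiv Pointwise

section PermGroupDefs

variable {Y : Type*}

/-- A subgroup of `Equiv.Perm Y` is transitive if it acts transitively on `Y`. -/
def SubTrans (G : Subgroup (Equiv.Perm Y)) : Prop :=
  ∀ x y : Y, ∃ g ∈ G, g x = y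

/-- A subgroup of `Equiv.Perm Y` is semiregular if only its identity fixes a point. -/
def SubSemiregular (H : Subgroup (Equiv.Perm Y)) : Prop :=
  ∀ h ∈ H, (∃ x : Y, h x = x) → h = 1

/-- A subgroup of `Equiv.Perm Y` is regular if it is transitive and semiregular. -/
def SubRegular (H : Subgroup (Equiv.Perm Y)) : Prop :=
  SubTrans H ∧ SubSemiregular H

/-- Two-transitivity. -/
def Sub2Trans (G : Subgroup (Equiv.Perm Y)) : Prop :=
  ∀ x₁ x₂ y₁ y₂ : Y, x₁ ≠ x₂ → y₁ ≠ y₂ → ∃ g ∈ G, g x₁ = y₁ ∧ g x₂ = y₂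

/-- Orbit of a point under a subgroup of `Equiv.Perm Y`. -/
def SubOrbit (H : Subgroup (Equiv.Perm Y)) (x : Y) : Set Y :=
  {y | ∃ h ∈ H, h x = y}

/-- The set of orbits of a subgroup of `Equiv.Perm Y`. -/
def SubOrbits (H : Subgroup (Equiv.Perm Y)) : Set (Set Y) :=
  Set.range (SubOrbit H)

/-- A block for a subgroup of `Equiv.Perm Y`. -/
def SubIsBlock (G : Subgroup (Equiv.Perm Y)) (B : Set Y) : Prop :=
  ∀ g ∈ G, (g : Equiv.Perm Y) '' B = B ∨ Disjoint ((g : Equiv.Perm Y) '' B) B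

/-- Primitivity: transitive and the only blocks are trivial. -/
def SubPrimitive (G : Subgroup (Equiv.Perm Y)) : Prop :=
  SubTrans G ∧ ∀ B : Set Y, B.Nonempty → SubIsBlock G B → B = Set.univ ∨ ∃ x, B = {x}

/-- A block system: a `G`-invariant partition of `Y`. -/
def IsBlockSystem (G : Subgroup (Equiv.Perm Y)) (P : Set (Set Y)) : Prop :=
  (∀ B ∈ P, B.Nonempty) ∧ (∀ x : Y, ∃! B : Set Y, B ∈ P ∧ x ∈ B) ∧
    (∀ g ∈ G, ∀ B ∈ P, (g : Equiv.Perm Y) '' B ∈ P)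

/-- A normal block system: the set of orbits of a normal subgroup. -/
def IsNormalBlockSystem (G : Subgroup (Equiv.Perm Y)) (P : Set (Set Y)) : Prop :=
  IsBlockSystem G P ∧
    ∃ N : Subgroup (Equiv.Perm Y), N ≤ G ∧ (∀ g ∈ G, ∀ x ∈ N, g * x * g⁻¹ ∈ N) ∧
      P = SubOrbits N

/-- `P` refines `Q`: every block of `P` is contained in a block of `Q`. -/
def Refines (P Q : Set (Set Y)) : Prop :=
  ∀ B ∈ P, ∃ C ∈ Q, B ⊆ C

/-- The partition of `Y` into singletons. -/
def SingletonPartition (Y : Type*) : Set (Set Y) :=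
  Set.range fun x : Y => ({x} : Set Y)

/-- A minimal (nontrivial) block system. -/
def IsMinimalBlockSystem (G : Subgroup (Equiv.Perm Y)) (P : Set (Set Y)) : Prop :=
  IsBlockSystem G P ∧ P ≠ SingletonPartition Y ∧
    ∀ Q : Set (Set Y), IsBlockSystem G Q → Refines Q P →
      Q = SingletonPartition Y ∨ Q = P

/-- `fix_G(P)`: elements of `G` stabilizing every block of `P` setwise. -/
def FixBlocks (G : Subgroup (Equiv.Perm Y)) (P : Set (Set Y)) : Subgroup (Equiv.Perm Y) :=
  G ⊓ ⨅ B ∈ P, MulAction.stabilizer (Equiv.Perm Y) B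

/-- The pointwise stabilizer of a set, inside the full symmetric group. -/
def PointStab (A : Set Y) : Subgroup (Equiv.Perm Y) :=
  ⨅ a ∈ A, MulAction.stabilizer (Equiv.Perm Y) a

/-- The support of a subgroup of `Equiv.Perm Y`. -/
def SubSupp (H : Subgroup (Equiv.Perm Y)) : Set Y :=
  {y | ∃ h ∈ H, h y ≠ y}

/-- `N` is a normal subgroup of the subgroup `H`. -/
def NormalIn {G : Type*} [Group G] (H N : Subgroup G) : Prop :=
  N ≤ H ∧ ∀ h ∈ H, ∀ x ∈ N, h * x * h⁻¹ ∈ N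

/-- `N` is a minimal normal subgroup of the subgroup `H`. -/
def MinimalNormalIn {G : Type*} [Group G] (H N : Subgroup G) : Prop :=
  NormalIn H N ∧ N ≠ ⊥ ∧ ∀ M : Subgroup G, NormalIn H M → M ≤ N → M = ⊥ ∨ M = N

/-- The socle of a subgroup `H`: the subgroup generated by the minimal
normal subgroups of `H`. -/
def SocleIn {G : Type*} [Group G] (H : Subgroup G) : Subgroup G :=
  ⨆ N ∈ {N : Subgroup G | MinimalNormalIn H N}, N

/-- The conjugate subgroup `g⁻¹ H g`. -/
def ConjSub {G : Type*} [Group G] (g : G) (H : Subgroup G) : Subgroup G :=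
  Subgroup.map (MulAut.conj g⁻¹).toMonoidHom H

/-- The permutation of an invariant set induced by an element of its setwise stabilizer. -/
def restrictHom {G Y : Type*} [Group G] [MulAction G Y] (A : Set Y) :
    MulAction.stabilizer G A →* Equiv.Perm A where
  toFun g := (MulAction.toPerm (g : G)).subtypePerm (fun y => by
    have hA : (g : G) • A = A := MulAction.mem_stabilizer_iff.mp g.2
    constructor
    · intro hy
      have : (g : G) • y ∈ (g : G) • A := by rwa [hA]
      exact Set.smul_mem_smul_set_iff.mp this
    · intro hy
      have : (g : G) • y ∈ (g : G) • A := Set.smul_mem_smul_set hy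
      rwa [hA] at this)
  map_one' := by
    ext x
    simp [Equiv.Perm.subtypePerm]
  map_mul' g h := by
    ext x
    simp [Equiv.Perm.subtypePerm, mul_smul]

/-- The permutation group induced on an invariant set `A` by (the setwise stabilizer of `A`
in) a subgroup `H`. -/
def InducedSub {G Y : Type*} [Group G] [MulAction G Y] (H : Subgroup G) (A : Set Y) :
    Subgroup (Equiv.Perm A) :=
  Subgroup.map (restrictHom A) (H.comap (MulAction.stabilizer G A).subtype)

end PermGroupDefs

section ClassR

/-- The class `𝓡` of groups from Definition 1.7. -/
def IsClassRGroup (R : Type*) [Group R] : Prop :=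
  ∃ n : ℕ, 0 < n ∧ Odd n ∧ Squarefree n ∧
    (Nonempty (R ≃* Multiplicative (ZMod n)) ∨
     Nonempty (R ≃* Multiplicative (ZMod n × ZMod 2)) ∨
     Nonempty (R ≃* Multiplicative (ZMod n × ZMod 2 × ZMod 2)) ∨
     Nonempty (R ≃* Multiplicative (ZMod n × ZMod 2 × ZMod 2 × ZMod 2)) ∨
     Nonempty (R ≃* Multiplicative (ZMod n × ZMod 2 × ZMod 2 × ZMod 2 × ZMod 2)) ∨
     Nonempty (R ≃* Multiplicative (ZMod n × ZMod 4)) ∨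
     Nonempty (R ≃* Multiplicative (ZMod n) × QuaternionGroup 2) ∨
     (∃ o : ℕ, (o = 2 ∨ o = 4 ∨ o = 8) ∧
       ∃ ψ : Multiplicative (ZMod o) →* MulAut (Multiplicative (ZMod n)),
         ψ (Multiplicative.ofAdd 1) ≠ 1 ∧ ψ (Multiplicative.ofAdd 1) ^ 2 = 1 ∧
         Nonempty (R ≃* Multiplicative (ZMod n) ⋊[ψ] Multiplicative (ZMod o))))

end ClassR

section CI

/-- `σ` is an isomorphism between the ternary relational structures `R` and `S`. -/
def TernaryIso {X I : Type*} (R S : I → Set (X × X × X)) (σ : Equiv.Perm X) : Prop :=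
  ∀ i, (fun t : X × X × X => (σ t.1, σ t.2.1, σ t.2.2)) '' R i = S i

/-- A ternary relational structure on a group `G` is a Cayley object if all left
translations are automorphisms. -/
def CayleyTernary (G : Type*) [Group G] {I : Type*} (R : I → Set (G × G × G)) : Prop :=
  ∀ g : G, TernaryIso R R (Equiv.mulLeft g)

/-- `G` is a CI-group with respect to ternary relational structures. -/
def IsTernaryCI (G : Type*) [Group G] : Prop :=
  ∀ (I : Type) (R S : I → Set (G × G × G)), CayleyTernary G R → CayleyTernary G S →
    (∃ σ : Equiv.Perm G, TernaryIso R S σ) →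
    ∃ φ : G ≃* G, TernaryIso R S φ.toEquiv

/-- `σ` is an isomorphism between the binary relational structures `R` and `S`. -/
def BinaryIso {X I : Type*} (R S : I → Set (X × X)) (σ : Equiv.Perm X) : Prop :=
  ∀ i, (fun t : X × X => (σ t.1, σ t.2)) '' R i = S i

/-- A binary relational structure on a group `G` is a Cayley object if all left
translations are automorphisms. -/
def CayleyBinary (G : Type*) [Group G] {I : Type*} (R : I → Set (G × G)) : Prop :=
  ∀ g : G, BinaryIso R R (Equiv.mulLeft g)

/-- `G` is a CI-group with respect to binary relational structures. -/
def IsBinaryCI (G : Type*) [Group G] : Prop :=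
  ∀ (I : Type) (R S : I → Set (G × G)), CayleyBinary G R → CayleyBinary G S →
    (∃ σ : Equiv.Perm G, BinaryIso R S σ) →
    ∃ φ : G ≃* G, BinaryIso R S φ.toEquiv

end CI

section Closure

/-- `σ` belongs to the `k`-closure of `G ≤ Sym(Y)`: it preserves every orbit of the
componentwise action of `G` on `Y^k`. -/
def InKClosure {Y : Type*} (k : ℕ) (G : Subgroup (Equiv.Perm Y)) (σ : Equiv.Perm Y) : Prop :=
  ∀ t : Fin k → Y, ∃ g ∈ G, ∀ i, σ (t i) = g (t i)

/-- `G` is `k`-closed. -/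
def IsKClosed {Y : Type*} (k : ℕ) (G : Subgroup (Equiv.Perm Y)) : Prop :=
  ∀ σ : Equiv.Perm Y, InKClosure k G σ → σ ∈ G

/-- The inner holomorph of `G`: the subgroup of `Sym(G)` generated by the left and right
regular representations. -/
def InnerHolomorph (G : Type*) [Group G] : Subgroup (Equiv.Perm G) :=
  Subgroup.closure
    ((Set.range fun g : G => Equiv.mulLeft g) ∪ (Set.range fun g : G => Equiv.mulRight g))

end Closure
open Multiplicative

namespace St18Aux

variable {p n : ℕ} (ψ : Multiplicative (ZMod n) →* MulAut (Multiplicative (ZMod p)))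
  (γu : (ZMod p)ˣ)

local notation "Gsd" => Multiplicative (ZMod p) ⋊[ψ] Multiplicative (ZMod n)

/-- power of γu by a `ZMod n` exponent -/
def chi (k : ZMod n) : (ZMod p)ˣ := γu ^ k.val

lemma chi_add [NeZero n] (hγ : γu ^ n = 1) (j k : ZMod n) :
    chi γu (j + k) = chi γu j * chi γu k := by
  unfold chi
  rw [ZMod.val_add, ← pow_add]
  conv_rhs => rw [← Nat.div_add_mod (j.val + k.val) n]
  rw [pow_add, pow_mul, hγ, one_pow, one_mul]

lemma chi_zero : chi γu (0 : ZMod n) = 1 := by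
  simp [chi, ZMod.val_zero]

/-- the affine-type permutations -/
def act (δ : (ZMod p)ˣ) (r w : ZMod p) (b : ZMod n) (g : Gsd) : Gsd :=
  ⟨ofAdd ((δ : ZMod p) * (toAdd g.left) + r
      + w * ((chi γu (toAdd g.right + b))⁻¹ : (ZMod p)ˣ)),
   ofAdd (toAdd g.right + b)⟩

end St18Aux

namespace St18Aux
variable {p n : ℕ} {ψ : Multiplicative (ZMod n) →* MulAut (Multiplicative (ZMod p))}
  {γu : (ZMod p)ˣ} [NeZero n] (hγ : γu ^ n = 1)
include hγ

local notation "Gsd" => Multiplicative (ZMod p) ⋊[ψ] Multiplicative (ZMod n)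

lemma act_comp (δ' δ : (ZMod p)ˣ) (r' w' r w : ZMod p) (b' b : ZMod n) (g : Gsd) :
    act ψ γu δ' r' w' b' (act ψ γu δ r w b g)
      = act ψ γu (δ' * δ) ((δ' : ZMod p) * r + r')
          ((δ' : ZMod p) * w * ((chi γu b' : (ZMod p)ˣ) : ZMod p) + w') (b + b') g := by
  unfold act
  have h1 : toAdd g.right + b + b' = toAdd g.right + (b + b') := by ring
  have h2 : chi γu (toAdd g.right + (b + b')) = chi γu (toAdd g.right + b) * chi γu b' := by
    rw [← chi_add γu hγ]; ring_nf
  have hcan : ((chi γu b' : (ZMod p)ˣ) : ZMod p) * (((chi γu b')⁻¹ : (ZMod p)ˣ) : ZMod p) = 1 :=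
    Units.mul_inv _
  ext
  · simp only [toAdd_ofAdd, h1, h2, mul_inv]
    push_cast
    linear_combination (-(δ' : ZMod p) * w
      * (((chi γu (toAdd g.right + b))⁻¹ : (ZMod p)ˣ) : ZMod p)) * hcan
  · simp only [toAdd_ofAdd, h1]

omit hγ in
lemma act_id (g : Gsd) : act ψ γu 1 0 0 0 g = g := by
  unfold act
  ext <;> simp

/-- predicate: f is one of our affine maps -/
def InA (f : Gsd → Gsd) : Prop :=
  ∃ δ r w b, f = act ψ γu δ r w b

lemma InA_comp {f f' : Gsd → Gsd} (hf : InA (ψ := ψ) (γu := γu) f)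
    (hf' : InA (ψ := ψ) (γu := γu) f') : InA (ψ := ψ) (γu := γu) (f' ∘ f) := by
  obtain ⟨δ, r, w, b, rfl⟩ := hf
  obtain ⟨δ', r', w', b', rfl⟩ := hf'
  exact ⟨_, _, _, _, funext fun g => act_comp hγ δ' δ r' w' r w b' b g⟩

lemma act_inv_left (δ : (ZMod p)ˣ) (r w : ZMod p) (b : ZMod n) (g : Gsd) :
    act ψ γu δ⁻¹ (-(δ⁻¹ : (ZMod p)ˣ) * r)
      (-((δ⁻¹ : (ZMod p)ˣ) : ZMod p) * w * (((chi γu b)⁻¹ : (ZMod p)ˣ) : ZMod p)) (-b)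
      (act ψ γu δ r w b g) = g := by
  rw [act_comp hγ]
  have h1 : (δ⁻¹ * δ : (ZMod p)ˣ) = 1 := by group
  have h3 : b + -b = 0 := by ring
  rw [h1, h3]
  have h2 : ((δ⁻¹ : (ZMod p)ˣ) : ZMod p) * r + -(δ⁻¹ : (ZMod p)ˣ) * r = 0 := by ring
  rw [h2]
  have h4 : ((δ⁻¹ : (ZMod p)ˣ) : ZMod p) * w * ((chi γu (-b) : (ZMod p)ˣ) : ZMod p)
      + -((δ⁻¹ : (ZMod p)ˣ) : ZMod p) * w * (((chi γu b)⁻¹ : (ZMod p)ˣ) : ZMod p) = 0 := by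
    have : (chi γu (-b) : (ZMod p)ˣ) = (chi γu b)⁻¹ := by
      have := chi_add γu hγ b (-b)
      rw [show b + -b = (0 : ZMod n) by ring, chi_zero] at this
      exact eq_inv_of_mul_eq_one_right this.symm
    rw [this]; ring
  rw [h4, act_id]

lemma InA_inv {f : Gsd → Gsd} (hf : InA (ψ := ψ) (γu := γu) f) :
    ∃ f' : Gsd → Gsd, InA (ψ := ψ) (γu := γu) f' ∧ (∀ g, f' (f g) = g) ∧ ∀ g, f (f' g) = g := by
  obtain ⟨δ, r, w, b, rfl⟩ := hf
  refine ⟨_, ⟨_, _, _, _, rfl⟩, fun g => act_inv_left hγ δ r w b g, fun g => ?_⟩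
  have h := act_inv_left (ψ := ψ) hγ δ r w b
  have hinj' : Function.Injective (act ψ γu δ⁻¹ (-(δ⁻¹ : (ZMod p)ˣ) * r)
      (-((δ⁻¹ : (ZMod p)ˣ) : ZMod p) * w * (((chi γu b)⁻¹ : (ZMod p)ˣ) : ZMod p)) (-b)) := by
    intro a b' hab
    have := congrArg (act ψ γu δ⁻¹⁻¹ (-(δ⁻¹⁻¹ : (ZMod p)ˣ) * (-(δ⁻¹ : (ZMod p)ˣ) * r))
      (-((δ⁻¹⁻¹ : (ZMod p)ˣ) : ZMod p)
          * (-((δ⁻¹ : (ZMod p)ˣ) : ZMod p) * w * (((chi γu b)⁻¹ : (ZMod p)ˣ) : ZMod p))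
          * (((chi γu (-b))⁻¹ : (ZMod p)ˣ) : ZMod p)) (-(-b))) hab
    rwa [act_inv_left hγ, act_inv_left hγ] at this
  exact hinj' (h _)

end St18Aux

namespace St18Aux
variable {p n : ℕ} {ψ : Multiplicative (ZMod n) →* MulAut (Multiplicative (ZMod p))}
  {γu : (ZMod p)ˣ} [NeZero n] (hγ : γu ^ n = 1)

local notation "Gsd" => Multiplicative (ZMod p) ⋊[ψ] Multiplicative (ZMod n)

/-- coordinatewise application to triples -/
def tmap (f : Gsd → Gsd) (t : Gsd × Gsd × Gsd) : Gsd × Gsd × Gsd :=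
  (f t.1, f t.2.1, f t.2.2)

/-- orbit of a triple under all the `act` maps -/
def Orb (t : Gsd × Gsd × Gsd) : Set (Gsd × Gsd × Gsd) :=
  {y | ∃ f, InA (ψ := ψ) (γu := γu) f ∧ y = tmap f t}

include hγ in
lemma Orb_invariant {f : Gsd → Gsd} (hf : InA (ψ := ψ) (γu := γu) f) (t : Gsd × Gsd × Gsd) :
    tmap f '' Orb (γu := γu) t = Orb (γu := γu) t := by
  apply Set.Subset.antisymm
  · rintro y ⟨z, ⟨g, hg, rfl⟩, rfl⟩
    exact ⟨f ∘ g, InA_comp hγ hg hf, rfl⟩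
  · rintro y ⟨g, hg, rfl⟩
    obtain ⟨f', hf', hleft, hright⟩ := InA_inv hγ hf
    refine ⟨tmap (f' ∘ g) t, ⟨f' ∘ g, InA_comp hγ hg hf', rfl⟩, ?_⟩
    simp [tmap, Function.comp, hright]

/-- the twisting permutation σ -/
def sig : Equiv.Perm Gsd where
  toFun g := ⟨ofAdd ((chi γu (toAdd g.right) : (ZMod p)ˣ) * toAdd g.left), g.right⟩
  invFun g := ⟨ofAdd ((((chi γu (toAdd g.right))⁻¹ : (ZMod p)ˣ) : ZMod p) * toAdd g.left), g.right⟩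
  left_inv g := by
    ext
    · show ofAdd _ = _
      simp only [toAdd_ofAdd]
      rw [← mul_assoc]
      have : (((chi γu (toAdd g.right))⁻¹ : (ZMod p)ˣ) : ZMod p)
          * ((chi γu (toAdd g.right) : (ZMod p)ˣ) : ZMod p) = 1 := Units.inv_mul _
      rw [this, one_mul]
      rfl
    · rfl
  right_inv g := by
    ext
    · show ofAdd _ = _
      simp only [toAdd_ofAdd]
      rw [← mul_assoc]
      have : ((chi γu (toAdd g.right) : (ZMod p)ˣ) : ZMod p)
          * (((chi γu (toAdd g.right))⁻¹ : (ZMod p)ˣ) : ZMod p) = 1 := Units.mul_inv _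
      rw [this, one_mul]
      rfl
    · rfl

end St18Aux

namespace St18Aux
variable {p n : ℕ} {ψ : Multiplicative (ZMod n) →* MulAut (Multiplicative (ZMod p))}
  {γu : (ZMod p)ˣ} [NeZero n] (hγ : γu ^ n = 1)
  {α : Multiplicative (ZMod n) →* (ZMod p)ˣ}
  (hψ : ∀ (g : Multiplicative (ZMod n)) (x : ZMod p),
      ψ g (Multiplicative.ofAdd x) = Multiplicative.ofAdd (((α g : (ZMod p)ˣ) : ZMod p) * x))

local notation "Gsd" => Multiplicative (ZMod p) ⋊[ψ] Multiplicative (ZMod n)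

include hψ in
lemma mulLeft_eq_act (g : Gsd) :
    (fun h : Gsd => g * h) = act ψ γu (α g.right) (toAdd g.left) 0 (toAdd g.right) := by
  funext h
  ext : 1
  · show (g * h).left = _
    rw [SemidirectProduct.mul_left]
    show g.left * ψ g.right h.left = ofAdd _
    have : ψ g.right h.left = ofAdd (((α g.right : (ZMod p)ˣ) : ZMod p) * toAdd h.left) := by
      rw [← hψ g.right (toAdd h.left)]
      simp
    rw [this]
    show ofAdd (toAdd g.left + _) = ofAdd _
    refine congrArg ofAdd ?_
    simp only [toAdd_ofAdd]
    ring
  · show (g * h).right = _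
    rw [SemidirectProduct.mul_right]
    show g.right * h.right = ofAdd (toAdd h.right + toAdd g.right)
    rw [add_comm]
    rfl

include hγ hψ in
lemma sig_conj_eq_act (g : Gsd) :
    ((sig (ψ := ψ) (γu := γu)).symm ∘ (fun h : Gsd => g * h) ∘ sig (ψ := ψ) (γu := γu))
      = act ψ γu (α g.right * (chi γu (toAdd g.right))⁻¹) 0 (toAdd g.left) (toAdd g.right) := by
  funext h
  rw [mulLeft_eq_act hψ]
  show (sig (ψ := ψ) (γu := γu)).symm
    (act ψ γu (α g.right) (toAdd g.left) 0 (toAdd g.right) (sig (ψ := ψ) (γu := γu) h)) = _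
  unfold sig act
  ext : 1
  · show ofAdd _ = ofAdd _
    refine congrArg ofAdd ?_
    simp only [Equiv.coe_fn_mk, Equiv.coe_fn_symm_mk, toAdd_ofAdd]
    have hsplit : chi γu (toAdd h.right + toAdd g.right)
        = chi γu (toAdd h.right) * chi γu (toAdd g.right) := chi_add γu hγ _ _
    rw [hsplit]
    have hcan : ((chi γu (toAdd h.right) : (ZMod p)ˣ) : ZMod p)
        * (((chi γu (toAdd h.right))⁻¹ : (ZMod p)ˣ) : ZMod p) = 1 := Units.mul_inv _
    push_cast [mul_inv]
    linear_combination ((((chi γu (toAdd g.right))⁻¹ : (ZMod p)ˣ) : ZMod p)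
      * ((α g.right : (ZMod p)ˣ) : ZMod p) * toAdd h.left) * hcan
  · rfl

end St18Aux

namespace St18Aux
variable {p n : ℕ} {ψ : Multiplicative (ZMod n) →* MulAut (Multiplicative (ZMod p))}
  {γu : (ZMod p)ˣ} [NeZero n] [NeZero p]

local notation "Gsd" => Multiplicative (ZMod p) ⋊[ψ] Multiplicative (ZMod n)

lemma sig_act_apply (hγ : γu ^ n = 1) (δ : (ZMod p)ˣ) (r w : ZMod p) (b : ZMod n)
    (v : ZMod p) (k : ZMod n) :
    sig (ψ := ψ) (γu := γu) (act ψ γu δ r w b ⟨ofAdd v, ofAdd k⟩)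
      = ⟨ofAdd (((chi γu (k + b) : (ZMod p)ˣ) : ZMod p) * ((δ : ZMod p) * v + r) + w),
          ofAdd (k + b)⟩ := by
  unfold sig act
  ext : 1
  · show ofAdd _ = ofAdd _
    refine congrArg ofAdd ?_
    simp only [toAdd_ofAdd]
    linear_combination w * (Units.mul_inv (chi γu (k + b)))
  · rfl

lemma mk_eq_inl (v : ZMod p) :
    (⟨ofAdd v, ofAdd (0 : ZMod n)⟩ : Gsd) = SemidirectProduct.inl (ofAdd v) := by
  ext
  · rfl
  · show ofAdd (0 : ZMod n) = 1
    simp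

lemma mk0_eq_inr (k : ZMod n) :
    (⟨ofAdd (0 : ZMod p), ofAdd k⟩ : Gsd) = SemidirectProduct.inr (ofAdd k) := by
  ext
  · show ofAdd (0 : ZMod p) = 1
    simp
  · rfl

lemma mk_eq_inl_mul_inr (v : ZMod p) (k : ZMod n) :
    (⟨ofAdd v, ofAdd k⟩ : Gsd)
      = SemidirectProduct.inl (ofAdd v) * SemidirectProduct.inr (ofAdd k) :=
  (SemidirectProduct.inl_left_mul_inr_right _).symm

lemma phi_inl (hpn : (p : ℕ) • (1 : ZMod n) = 1) (φ : Gsd ≃* Gsd) (x : ZMod p) :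
    φ (SemidirectProduct.inl (ofAdd x))
      = SemidirectProduct.inl (ofAdd
          (toAdd ((φ (SemidirectProduct.inl (ofAdd (1 : ZMod p)))).left) * x)) := by
  -- first: φ maps inl to inl
  have hchar : ∀ y : ZMod p, ∃ c : ZMod p,
      φ (SemidirectProduct.inl (ofAdd y)) = SemidirectProduct.inl (ofAdd c) := by
    intro y
    have hpow : (SemidirectProduct.inl (ofAdd y) : Gsd) ^ p = 1 := by
      rw [← map_pow]
      have : (ofAdd y) ^ p = 1 := by
        show ofAdd ((p : ℕ) • y) = 1
        rw [nsmul_eq_mul, ZMod.natCast_self, zero_mul]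
        rfl
      rw [this, map_one]
    have hr : (φ (SemidirectProduct.inl (ofAdd y))).right = 1 := by
      have h1 : ((φ (SemidirectProduct.inl (ofAdd y))).right) ^ p = 1 := by
        have := congrArg (SemidirectProduct.rightHom
          (φ := ψ)) (congrArg φ hpow)
        rw [map_pow, map_pow, map_one, map_one] at this
        simpa using this
      set k := (φ (SemidirectProduct.inl (ofAdd y))).right with hk
      have h2 : (p : ℕ) • toAdd k = 0 := by
        have := congrArg toAdd h1
        simpa [toAdd_pow] using this
      have h3 : (p : ℕ) • toAdd k = toAdd k := by
        rw [nsmul_eq_mul]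
        calc (p : ZMod n) * toAdd k = ((p : ℕ) • (1 : ZMod n)) * toAdd k := by
              rw [nsmul_eq_mul, mul_one]
          _ = toAdd k := by rw [hpn, one_mul]
      have : toAdd k = 0 := by rw [← h3, h2]
      have : k = ofAdd 0 := by
        rw [← this]
        rfl
      simpa using this
    refine ⟨toAdd ((φ (SemidirectProduct.inl (ofAdd y))).left), ?_⟩
    have := SemidirectProduct.inl_left_mul_inr_right (φ (SemidirectProduct.inl (ofAdd y)))
    rw [hr] at this
    simp only [map_one, mul_one] at this
    rw [← this]
    simp
  -- additivity
  set L : ZMod p → ZMod p := fun y => toAdd ((φ (SemidirectProduct.inl (ofAdd y))).left) with hL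
  have hLspec : ∀ y, φ (SemidirectProduct.inl (ofAdd y)) = SemidirectProduct.inl (ofAdd (L y)) := by
    intro y
    obtain ⟨c, hc⟩ := hchar y
    simp [hL, hc]
  have hadd : ∀ y z : ZMod p, L (y + z) = L y + L z := by
    intro y z
    have : φ (SemidirectProduct.inl (ofAdd (y + z)))
        = φ (SemidirectProduct.inl (ofAdd y)) * φ (SemidirectProduct.inl (ofAdd z)) := by
      rw [← map_mul, ← map_mul, ← ofAdd_add]
    rw [hLspec, hLspec, hLspec, ← map_mul, ← ofAdd_add] at this
    have := congrArg (fun g : Gsd => toAdd g.left) this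
    simpa using this
  have hlin : L x = L 1 * x := by
    let f : ZMod p →+ ZMod p := AddMonoidHom.mk' L hadd
    have hx1 : x = (x.val : ℕ) • (1 : ZMod p) := by
      rw [nsmul_eq_mul, mul_one, ZMod.natCast_rightInverse x]
    have hfL : ∀ y, f y = L y := fun y => rfl
    calc L x = f x := (hfL x).symm
      _ = f ((x.val : ℕ) • (1 : ZMod p)) := by rw [← hx1]
      _ = (x.val : ℕ) • f 1 := map_nsmul f _ _
      _ = (x.val : ZMod p) * f 1 := by rw [nsmul_eq_mul]
      _ = x * L 1 := by rw [ZMod.natCast_rightInverse x, hfL]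
      _ = L 1 * x := mul_comm _ _
  rw [hLspec x, hlin]
end St18Aux

open Equiv Pointwise

/-- Corollary 7.3: for a prime `p`, a divisor `n` of `p - 1` with
`2 < n < p - 1`, and a non-injective homomorphism `α : Z_n → (ZMod p)ˣ` (whose kernel has
even order if `n` is even), the group `ZMod p ⋊_α Z_n` is not a CI-group with respect to
ternary relational structures. -/
theorem statement18 (p n : ℕ) (hp : p.Prime) (hdvd : n ∣ p - 1) (h2 : 2 < n)
    (hn : n < p - 1)
    (α : Multiplicative (ZMod n) →* (ZMod p)ˣ) (hninj : ¬ Function.Injective α)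
    (hker : Even n → Even (Nat.card ↥α.ker))
    (ψ : Multiplicative (ZMod n) →* MulAut (Multiplicative (ZMod p)))
    (hψ : ∀ (g : Multiplicative (ZMod n)) (x : ZMod p),
      ψ g (Multiplicative.ofAdd x) = Multiplicative.ofAdd (((α g : (ZMod p)ˣ) : ZMod p) * x)) :
    ¬ IsTernaryCI (Multiplicative (ZMod p) ⋊[ψ] Multiplicative (ZMod n)) := by
  intro hCI
  haveI : Fact p.Prime := ⟨hp⟩
  haveI : NeZero n := ⟨by omega⟩
  haveI : NeZero p := ⟨hp.ne_zero⟩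
  -- a unit of order n
  obtain ⟨g0, hg0⟩ := IsCyclic.exists_ofOrder_eq_natCard (α := (ZMod p)ˣ)
  have hcard : Nat.card (ZMod p)ˣ = p - 1 := by
    rw [Nat.card_eq_fintype_card, ZMod.card_units]
  rw [hcard] at hg0
  set k0 := (p - 1) / n with hk0
  have hk0n : k0 * n = p - 1 := Nat.div_mul_cancel hdvd
  have hk0pos : 0 < k0 := by
    rcases Nat.eq_zero_or_pos k0 with h | h
    · rw [h, zero_mul] at hk0n; omega
    · exact h
  set γu := g0 ^ k0 with hγu
  have hγ : γu ^ n = 1 := by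
    rw [hγu, ← pow_mul, hk0n, ← hg0, pow_orderOf_eq_one]
  have hγ2 : γu ^ 2 ≠ 1 := by
    intro hc
    rw [hγu, ← pow_mul] at hc
    have hdd := orderOf_dvd_of_pow_eq_one hc
    rw [hg0] at hdd
    have hle := Nat.le_of_dvd (by omega) hdd
    have : k0 * 2 < k0 * n := by
      nlinarith
    omega
  set Gt := Multiplicative (ZMod p) ⋊[ψ] Multiplicative (ZMod n) with hGt
  set R : (Gt × Gt × Gt) → Set (Gt × Gt × Gt) := St18Aux.Orb (ψ := ψ) (γu := γu) with hRdef
  set σ0 : Equiv.Perm Gt := St18Aux.sig (ψ := ψ) (γu := γu) with hσ0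
  set S : (Gt × Gt × Gt) → Set (Gt × Gt × Gt) :=
    fun t => (fun y : Gt × Gt × Gt => (σ0 y.1, σ0 y.2.1, σ0 y.2.2)) '' R t with hSdef
  have hCR : CayleyTernary Gt R := by
    intro g t
    show St18Aux.tmap (fun h => g * h) '' R t = R t
    rw [St18Aux.mulLeft_eq_act hψ]
    exact St18Aux.Orb_invariant hγ ⟨_, _, _, _, rfl⟩ t
  have hCS : CayleyTernary Gt S := by
    intro g t
    show St18Aux.tmap (fun h => g * h) '' S t = S t
    rw [hSdef]
    show St18Aux.tmap (fun h => g * h) '' (St18Aux.tmap σ0 '' R t) = St18Aux.tmap σ0 '' R t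
    rw [← Set.image_comp]
    have hcomp : St18Aux.tmap (fun h => g * h) ∘ St18Aux.tmap (σ0 : Gt → Gt)
        = St18Aux.tmap σ0 ∘ St18Aux.tmap (σ0.symm ∘ (fun h => g * h) ∘ σ0) := by
      funext t'
      simp [St18Aux.tmap, Function.comp]
    rw [hcomp, Set.image_comp, hσ0, St18Aux.sig_conj_eq_act hγ hψ, hRdef,
      St18Aux.Orb_invariant hγ ⟨_, _, _, _, rfl⟩]
  have hTI : TernaryIso R S σ0 := fun i => rfl
  obtain ⟨φ, hφ⟩ := hCI (Gt × Gt × Gt) R S hCR hCS ⟨σ0, hTI⟩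
  -- now derive a contradiction
  have hpn : (p : ℕ) • (1 : ZMod n) = 1 := by
    rw [nsmul_eq_mul, mul_one]
    have h1 : ((p - 1 : ℕ) : ZMod n) = 0 := (ZMod.natCast_eq_zero_iff _ _).mpr hdvd
    have hp1 : p = (p - 1) + 1 := by omega
    rw [hp1]
    push_cast
    rw [h1, zero_add]
  set lam := toAdd ((φ (SemidirectProduct.inl (ofAdd (1 : ZMod p)))).left) with hlamdef
  have hlam : ∀ x : ZMod p, φ (SemidirectProduct.inl (ofAdd x))
      = SemidirectProduct.inl (ofAdd (lam * x)) := fun x => St18Aux.phi_inl hpn φ x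
  have hlam0 : lam ≠ 0 := by
    intro h
    have h1 : φ (SemidirectProduct.inl (ofAdd (1 : ZMod p))) = 1 := by
      rw [hlam 1, h, zero_mul]
      simp
    have h2 : (SemidirectProduct.inl (ofAdd (1 : ZMod p)) : Gt) = 1 := by
      apply φ.injective
      rw [h1, map_one]
    have h3 := congrArg (fun g : Gt => toAdd g.left) h2
    simp at h3
  set g1 : ZMod p := ((γu : (ZMod p)ˣ) : ZMod p) with hg1def
  set g2 : ZMod p := ((γu⁻¹ : (ZMod p)ˣ) : ZMod p) with hg2def
  have hg12 : g1 * g2 = 1 := Units.mul_inv γu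
  have hg2g1 : g2 - g1 ≠ 0 := by
    intro h
    have hueq : γu⁻¹ = γu := Units.ext (by
      have : g2 = g1 := by linear_combination h
      exact this)
    apply hγ2
    rw [pow_two]
    nth_rewrite 1 [← hueq]
    exact inv_mul_cancel γu
  set μu : Gt := φ (SemidirectProduct.inr (ofAdd (1 : ZMod n))) with hμudef
  set μ : ZMod p := toAdd μu.left with hμdef
  set βv : ZMod p := ((α (ofAdd (1 : ZMod n)) : (ZMod p)ˣ) : ZMod p) with hβvdef
  set x : ZMod p := (μ * (βv - g1) + 1) * (lam * (g2 - g1))⁻¹ with hxdef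
  set z : ZMod p := -(g2 * x) with hzdef
  set t₁ : Gt := ⟨ofAdd x, ofAdd (0 : ZMod n)⟩ with ht₁
  set t₂ : Gt := ⟨ofAdd (0 : ZMod p), ofAdd (1 : ZMod n)⟩ with ht₂
  set t₃ : Gt := ⟨ofAdd z, ofAdd (2 : ZMod n)⟩ with ht₃
  set tstar : Gt × Gt × Gt := (t₁, t₂, t₃) with htstar
  have ht : tstar ∈ R tstar := by
    refine ⟨St18Aux.act ψ γu 1 0 0 0, ⟨1, 0, 0, 0, rfl⟩, ?_⟩
    show tstar = St18Aux.tmap _ tstar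
    simp [St18Aux.tmap, St18Aux.act_id]
  have hmem : (φ t₁, φ t₂, φ t₃) ∈ S tstar := by
    rw [← hφ tstar]
    exact Set.mem_image_of_mem _ ht
  obtain ⟨y, ⟨f, ⟨δ, r, w, b, rfl⟩, rfl⟩, heq⟩ := hmem
  have e1 : σ0 (St18Aux.act ψ γu δ r w b t₁) = φ t₁ := congrArg Prod.fst heq
  have e2 : σ0 (St18Aux.act ψ γu δ r w b t₂) = φ t₂ := congrArg (fun q => q.2.1) heq
  have e3 : σ0 (St18Aux.act ψ γu δ r w b t₃) = φ t₃ := congrArg (fun q => q.2.2) heq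
  rw [ht₁, hσ0, St18Aux.sig_act_apply hγ, St18Aux.mk_eq_inl, hlam x] at e1
  have hb : b = 0 := by
    have := congrArg (fun g : Gt => toAdd g.right) e1
    simpa using this
  subst hb
  have hE0 : (δ : ZMod p) * x + r + w = lam * x := by
    have := congrArg (fun g : Gt => toAdd g.left) e1
    simpa [St18Aux.chi_zero] using this
  -- chi values
  have hchi1 : St18Aux.chi γu (1 : ZMod n) = γu := by
    unfold St18Aux.chi
    have h1 : (1 : ZMod n) = ((1 : ℕ) : ZMod n) := by norm_cast
    rw [h1, ZMod.val_cast_of_lt (by omega)]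
    exact pow_one _
  have hchi2 : St18Aux.chi γu (2 : ZMod n) = γu ^ 2 := by
    unfold St18Aux.chi
    have h1 : (2 : ZMod n) = ((2 : ℕ) : ZMod n) := by norm_cast
    rw [h1, ZMod.val_cast_of_lt (by omega)]
  -- second equation
  rw [ht₂, hσ0, St18Aux.sig_act_apply hγ, St18Aux.mk0_eq_inr, ← hμudef] at e2
  have hu : μu.right = ofAdd (1 : ZMod n) := by
    have := congrArg (fun g : Gt => g.right) e2
    simpa using this.symm
  have hE1 : g1 * r + w = μ := by
    have h := congrArg (fun g : Gt => toAdd g.left) e2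
    simp [hchi1] at h
    rw [hg1def, hμdef]
    linear_combination h
  -- third equation
  rw [ht₃, hσ0, St18Aux.sig_act_apply hγ] at e3
  have hφt₃ : φ t₃ = ⟨ofAdd (lam * z + (μ + βv * μ)), ofAdd (2 : ZMod n)⟩ := by
    have hμμ : μu * μu = ⟨ofAdd (μ + βv * μ), ofAdd (2 : ZMod n)⟩ := by
      have hleft : μu.left = ofAdd μ := by rw [hμdef]; simp
      ext
      · show μu.left * ψ μu.right μu.left = ofAdd (μ + βv * μ)
        rw [hu, hleft, hψ, ← ofAdd_add, hβvdef]
      · show μu.right * μu.right = ofAdd (2 : ZMod n)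
        rw [hu, ← ofAdd_add]
        norm_num
    have h23 : φ t₃ = φ (SemidirectProduct.inl (ofAdd z))
        * φ (SemidirectProduct.inr (ofAdd (2 : ZMod n))) := by
      rw [← map_mul, ht₃, St18Aux.mk_eq_inl_mul_inr]
    have h24 : φ (SemidirectProduct.inr (ofAdd (2 : ZMod n))) = μu * μu := by
      have : (ofAdd (2 : ZMod n)) = ofAdd (1 : ZMod n) * ofAdd (1 : ZMod n) := by
        rw [← ofAdd_add]
        norm_num
      rw [this, map_mul, map_mul, ← hμudef]
    rw [h23, h24, hμμ, hlam z]
    ext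
    · show ofAdd (lam * z) * ψ 1 (ofAdd (μ + βv * μ)) = ofAdd (lam * z + (μ + βv * μ))
      rw [map_one]
      rfl
    · show 1 * ofAdd (2 : ZMod n) = ofAdd (2 : ZMod n)
      rw [one_mul]
  rw [hφt₃] at e3
  have hE2 : g1 * g1 * ((δ : ZMod p) * z + r) + w = lam * z + (μ + βv * μ) := by
    have h := congrArg (fun g : Gt => toAdd g.left) e3
    simp [hchi2] at h
    rw [hg1def]
    push_cast [pow_two] at h ⊢
    linear_combination h
  -- the contradiction
  have key : lam * x * (g2 - g1) = μ * (βv - g1) := by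
    rw [hzdef] at hE2
    linear_combination hE2 + g1 * hE0 - (1 + g1) * hE1 + ((δ : ZMod p) * x * g1) * hg12
  have hne : lam * (g2 - g1) ≠ 0 := mul_ne_zero hlam0 hg2g1
  have hval : lam * x * (g2 - g1) = μ * (βv - g1) + 1 := by
    rw [hxdef]
    field_simp
  rw [hval] at key
  have h10 : (1 : ZMod p) = 0 := by linear_combination key
  exact one_ne_zero h10
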